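/- Let s_* > 0, let γ_i : [s_*, ∞) → ℝ be continuous, non-negative and non-decreasing with γ_i(s_*) = 0, let γ_d : [s_*, ∞) → ℝ be continuous and non-positive with γ_d(s_*) = 0, set Γ_d(s) := ∫_{s_*}^s γ_d, and set γ(s) := c + γ_i(s) + γ_d(s) with c > 0 for s ≥ s_*, extended so that γ(s) ≤ c for s ∈ (0, s_*]. If V : [0,T) → (0,∞) is C¹, satisfies V(0) = s_* and V'(t) + V(t)·γ(V(t)) ≤ [c + γ_i(V(t))]·V(t) + Γ_d(V(t)) for all t where V(t) ≥ s_*, and γ_d is C¹ with γ_d' ≤ 0, then V(t) ≤ s_* for all t ∈ [0,T). -/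
import Mathlib

open Set intervalIntegral

set_option maxHeartbeats 1000000

/-- the key ODE comparison in the proof of Proposition 2.5: the supersolution
`V` starting from `s_*` never exceeds `s_*`. -/
theorem stmt6 (s_star : ℝ) (hs : 0 < s_star)
    (γi γd γd' Γd γ : ℝ → ℝ) (c : ℝ) (hc : 0 < c)
    (hγicont : ContinuousOn γi (Set.Ici s_star))
    (hγinonneg : ∀ s ∈ Set.Ici s_star, 0 ≤ γi s)
    (hγimono : MonotoneOn γi (Set.Ici s_star))
    (hγi0 : γi s_star = 0)
    (hγdcont : ContinuousOn γd (Set.Ici s_star))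
    (hγdnonpos : ∀ s ∈ Set.Ici s_star, γd s ≤ 0)
    (hγd0 : γd s_star = 0)
    (hγdderiv : ∀ s ∈ Set.Ici s_star, HasDerivAt γd (γd' s) s)
    (hγd'le : ∀ s ∈ Set.Ici s_star, γd' s ≤ 0)
    (hΓd : ∀ s, Γd s = ∫ σ in s_star..s, γd σ)
    (hγeq : ∀ s ∈ Set.Ici s_star, γ s = c + γi s + γd s)
    (hγext : ∀ s, 0 < s → s ≤ s_star → γ s ≤ c)
    (T : ℝ) (hT : 0 < T) (V V' : ℝ → ℝ)
    (hVpos : ∀ t ∈ Set.Ico 0 T, 0 < V t)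
    (hVderiv : ∀ t ∈ Set.Ico 0 T, HasDerivAt V (V' t) t)
    (hVinit : V 0 = s_star)
    (hODE : ∀ t ∈ Set.Ico 0 T, s_star ≤ V t →
      V' t + V t * γ (V t) ≤ (c + γi (V t)) * V t + Γd (V t)) :
    ∀ t ∈ Set.Ico 0 T, V t ≤ s_star := by
  intro t₀ ht₀
  by_contra hcon
  push_neg at hcon
  obtain ⟨ht₀0, ht₀T⟩ := ht₀
  -- continuity facts
  have hVcontAt : ∀ t ∈ Set.Ico 0 T, ContinuousAt V t := fun t ht => (hVderiv t ht).continuousAt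
  have hsub : Icc (0:ℝ) t₀ ⊆ Ico 0 T := fun t ht => ⟨ht.1, lt_of_le_of_lt ht.2 ht₀T⟩
  have hVcontOn : ContinuousOn V (Icc 0 t₀) :=
    fun t ht => (hVcontAt t (hsub ht)).continuousWithinAt
  -- the last time ≤ t₀ when V ≤ s_star
  set B : Set ℝ := Icc 0 t₀ ∩ V ⁻¹' (Iic s_star) with hB
  have hBne : B.Nonempty := ⟨0, ⟨le_refl 0, ht₀0⟩, by simp [hVinit]⟩
  have hBbdd : BddAbove B := ⟨t₀, fun x hx => hx.1.2⟩
  have hBclosed : IsClosed B :=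
    hVcontOn.preimage_isClosed_of_isClosed isClosed_Icc isClosed_Iic
  set t₁ := sSup B with ht₁def
  have ht₁B : t₁ ∈ B := hBclosed.csSup_mem hBne hBbdd
  have ht₁0 : (0:ℝ) ≤ t₁ := ht₁B.1.1
  have ht₁t₀ : t₁ ≤ t₀ := ht₁B.1.2
  have hVt₁le : V t₁ ≤ s_star := ht₁B.2
  have ht₁lt : t₁ < t₀ := lt_of_le_of_ne ht₁t₀ (fun h => by rw [h] at hVt₁le; linarith)
  -- V > s_star on (t₁, t₀]
  have hgt : ∀ t, t₁ < t → t ≤ t₀ → s_star < V t := by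
    intro t h1 h2
    by_contra h
    push_neg at h
    have htB : t ∈ B := ⟨⟨le_trans ht₁0 h1.le, h2⟩, h⟩
    exact absurd (le_csSup hBbdd htB) (not_le.mpr h1)
  -- V t₁ = s_star
  have hVt₁ : V t₁ = s_star := by
    refine le_antisymm hVt₁le ?_
    have htend : Filter.Tendsto V (nhdsWithin t₁ (Ioc t₁ t₀)) (nhds (V t₁)) :=
      (hVcontAt t₁ (hsub ⟨ht₁0, ht₁t₀⟩)).continuousWithinAt
    have hne : (nhdsWithin t₁ (Ioc t₁ t₀)).NeBot := by
      refine mem_closure_iff_nhdsWithin_neBot.mp ?_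
      rw [closure_Ioc ht₁lt.ne]
      exact ⟨le_refl t₁, ht₁t₀⟩
    refine ge_of_tendsto htend ?_
    filter_upwards [self_mem_nhdsWithin] with x hx
    exact (hgt x hx.1 hx.2).le
  -- extract ε from differentiability of γd at s_star
  have hd : HasDerivAt γd (γd' s_star) s_star := hγdderiv s_star (self_mem_Ici)
  have hslope := hasDerivAt_iff_tendsto_slope.mp hd
  have hev : ∀ᶠ x in nhdsWithin s_star {s_star}ᶜ,
      γd' s_star - 1 < slope γd s_star x :=
    hslope.eventually (eventually_gt_nhds (by linarith))
  rw [eventually_nhdsWithin_iff, Metric.eventually_nhds_iff] at hev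
  obtain ⟨ε₀, hε₀, hball⟩ := hev
  set ε := ε₀ / 2 with hεdef
  have hε : 0 < ε := by positivity
  set L : ℝ := 1 - γd' s_star with hLdef
  have hL : 0 < L := by
    have := hγd'le s_star self_mem_Ici
    simp only [hLdef]; linarith
  have hγdbound : ∀ s, s_star ≤ s → s ≤ s_star + ε → -γd s ≤ L * (s - s_star) := by
    intro s h1 h2
    rcases eq_or_lt_of_le h1 with rfl | hlt
    · simp [hγd0]
    · have hdist : dist s s_star < ε₀ := by
        rw [Real.dist_eq, abs_of_pos (by linarith)]
        linarith [half_lt_self hε₀]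
      have hmem : s ∈ ({s_star}ᶜ : Set ℝ) := by
        simp only [mem_compl_iff, mem_singleton_iff]
        exact ne_of_gt hlt
      have hsl := hball hdist hmem
      rw [slope_def_field, hγd0, sub_zero] at hsl
      have hpos : 0 < s - s_star := by linarith
      have h2 : (γd' s_star - 1) * (s - s_star) < γd s := (lt_div_iff₀ hpos).mp hsl
      simp only [hLdef]
      nlinarith
  set K : ℝ := (s_star + ε) * L with hKdef
  have hK : 0 < K := by positivity
  -- first time in [t₁, t₀] when V reaches s_star + ε (or t₀)
  set S : Set ℝ := Icc t₁ t₀ ∩ V ⁻¹' (Ici (s_star + ε)) with hS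
  have hVcontOn' : ContinuousOn V (Icc t₁ t₀) :=
    hVcontOn.mono (Icc_subset_Icc ht₁0 le_rfl)
  have hSclosed : IsClosed S :=
    hVcontOn'.preimage_isClosed_of_isClosed isClosed_Icc isClosed_Ici
  obtain ⟨t₂, ht₂1, ht₂0, ht₂gt, ht₂le⟩ :
      ∃ t₂, t₁ < t₂ ∧ t₂ ≤ t₀ ∧ s_star < V t₂ ∧ ∀ t, t₁ ≤ t → t < t₂ → V t ≤ s_star + ε := by
    rcases eq_empty_or_nonempty S with hSe | hSne
    · refine ⟨t₀, ht₁lt, le_rfl, hcon, fun t h1 h2 => ?_⟩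
      by_contra hcontra
      push_neg at hcontra
      have hmem : t ∈ S := ⟨⟨h1, h2.le⟩, hcontra.le⟩
      rw [hSe] at hmem
      exact absurd hmem (notMem_empty t)
    · have hSbdd : BddBelow S := ⟨t₁, fun x hx => hx.1.1⟩
      set t₂ := sInf S with ht₂def
      have ht₂S : t₂ ∈ S := hSclosed.csInf_mem hSne hSbdd
      have ht₂V : s_star + ε ≤ V t₂ := ht₂S.2
      have ht₂ne : t₁ ≠ t₂ := by
        intro h
        rw [← h, hVt₁] at ht₂V
        linarith
      refine ⟨t₂, lt_of_le_of_ne ht₂S.1.1 ht₂ne, ht₂S.1.2, by linarith, fun t h1 h2 => ?_⟩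
      by_contra hcontra
      push_neg at hcontra
      have : t ∈ S := ⟨⟨h1, le_trans h2.le ht₂S.1.2⟩, hcontra.le⟩
      exact absurd (csInf_le hSbdd this) (not_le.mpr h2)
  -- Grönwall: h t = exp (-K * t) * (V t - s_star) is antitone on [t₁, t₂]
  have hIccsub : Icc t₁ t₂ ⊆ Ico 0 T :=
    fun t ht => ⟨le_trans ht₁0 ht.1, lt_of_le_of_lt (le_trans ht.2 ht₂0) ht₀T⟩
  have hderivh : ∀ t ∈ interior (Icc t₁ t₂),
      HasDerivAt (fun t => Real.exp (-K * t) * (V t - s_star))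
        (Real.exp (-K * t) * (-K) * (V t - s_star) + Real.exp (-K * t) * V' t) t := by
    intro t ht
    have h1 : HasDerivAt (fun t => Real.exp (-K * t)) (Real.exp (-K * t) * (-K)) t := by
      have := ((hasDerivAt_id t).const_mul (-K)).exp
      simpa [mul_comm] using this
    have h2 : HasDerivAt (fun t => V t - s_star) (V' t) t :=
      (hVderiv t (hIccsub (interior_subset ht))).sub_const s_star
    exact h1.mul h2
  have hkey : ∀ t ∈ interior (Icc t₁ t₂),
      Real.exp (-K * t) * (-K) * (V t - s_star) + Real.exp (-K * t) * V' t ≤ 0 := by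
    intro t ht
    rw [interior_Icc] at ht
    have htIco : t ∈ Ico 0 T := hIccsub ⟨ht.1.le, ht.2.le⟩
    have hVgt : s_star < V t := hgt t ht.1 (le_trans ht.2.le ht₂0)
    have hVle : V t ≤ s_star + ε := ht₂le t ht.1.le ht.2
    -- ODE gives V' t ≤ Γd (V t) - V t * γd (V t)
    have hode := hODE t htIco hVgt.le
    rw [hγeq (V t) hVgt.le] at hode
    have hV'le : V' t ≤ Γd (V t) - V t * γd (V t) := by nlinarith [hode]
    -- Γd (V t) ≤ 0
    have hΓdle : Γd (V t) ≤ 0 := by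
      rw [hΓd]
      have hint : IntervalIntegrable γd MeasureTheory.volume s_star (V t) := by
        apply ContinuousOn.intervalIntegrable
        apply hγdcont.mono
        rw [uIcc_of_le hVgt.le]
        exact fun x hx => hx.1
      have : (0:ℝ) ≤ ∫ σ in s_star..(V t), -γd σ := by
        apply intervalIntegral.integral_nonneg hVgt.le
        intro u hu
        simpa using hγdnonpos u hu.1
      rw [intervalIntegral.integral_neg] at this
      linarith
    -- -V t * γd (V t) ≤ K * (V t - s_star)
    have hb := hγdbound (V t) hVgt.le hVle
    have hVpos' : 0 < V t := lt_trans hs hVgt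
    have hbound : V' t ≤ K * (V t - s_star) := by
      have : -(V t) * γd (V t) ≤ K * (V t - s_star) := by
        have h1 : V t * (-γd (V t)) ≤ (s_star + ε) * (L * (V t - s_star)) := by
          apply mul_le_mul hVle hb (by linarith [hγdnonpos (V t) hVgt.le]) (by positivity)
        simp only [hKdef]
        nlinarith
      nlinarith
    have hexp : 0 < Real.exp (-K * t) := Real.exp_pos _
    have hm : Real.exp (-K * t) * V' t ≤ Real.exp (-K * t) * (K * (V t - s_star)) :=
      mul_le_mul_of_nonneg_left hbound hexp.le
    have heq : Real.exp (-K * t) * (-K) * (V t - s_star)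
        + Real.exp (-K * t) * (K * (V t - s_star)) = 0 := by ring
    linarith
  have hanti : AntitoneOn (fun t => Real.exp (-K * t) * (V t - s_star)) (Icc t₁ t₂) := by
    apply antitoneOn_of_deriv_nonpos (convex_Icc t₁ t₂)
    · have hexpc : Continuous fun t : ℝ => Real.exp (-K * t) := by fun_prop
      have hVc : ContinuousOn V (Icc t₁ t₂) :=
        fun t ht => (hVcontAt t (hIccsub ht)).continuousWithinAt
      exact hexpc.continuousOn.mul (hVc.sub continuousOn_const)
    · intro t ht
      exact (hderivh t ht).differentiableAt.differentiableWithinAt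
    · intro t ht
      rw [(hderivh t ht).deriv]
      exact hkey t ht
  have h1 : Real.exp (-K * t₂) * (V t₂ - s_star) ≤ Real.exp (-K * t₁) * (V t₁ - s_star) :=
    hanti ⟨le_rfl, ht₂1.le⟩ ⟨ht₂1.le, le_rfl⟩ ht₂1.le
  have h2 : Real.exp (-K * t₁) * (V t₁ - s_star) = 0 := by simp [hVt₁]
  have h3 : 0 < Real.exp (-K * t₂) * (V t₂ - s_star) := by
    have := Real.exp_pos (-K * t₂)
    nlinarith
  linarith
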